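/- arXiv:1412.4719 — 2 statements merged into one kernel-verified Lean document; each statement's English description precedes it below -/
import Mathlib

section
/- If g : ZMod 2 → ℝ/ℤ satisfies g(0)=0, g(1)=a/m with m odd and 1 ≤ a ≤ m−1, and G = e∘g, then ‖G‖_{U^d}^{2^d} = (1 − 2^{−d}) + 2^{−d}·cos(2π a' / m) where a' = a·2^{d−1} mod m, and consequently ‖G‖_{U^d}^{2^d} ≤ 1 − 2^{−d}·Ω(1/m²). -/
open Finset

/-- Additive directional derivative `D_h f(x) = f(x+h) - f(x)`. -/
noncomputable def D {V M : Type*} [Add V] [AddCommGroup M] (h : V) (f : V → M) : V → M :=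
  fun x => f (x + h) - f x

/-- `f` is a nonclassical polynomial of degree at most `d`:
all `(d+1)`-fold iterated derivatives vanish identically. -/
def IsNCPoly {V M : Type*} [Add V] [AddCommGroup M] (d : ℕ) (f : V → M) : Prop :=
  ∀ hs : List V, hs.length = d + 1 → hs.foldr D f = 0

/-- `e(t) = exp(2πit)` on the torus `ℝ/ℤ`. -/
noncomputable def e : AddCircle (1 : ℝ) → ℂ :=
  Function.Periodic.lift (f := fun t : ℝ => Complex.exp (2 * (Real.pi : ℂ) * Complex.I * (t : ℂ)))
    (by
      intro t
      dsimp only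
      rw [Complex.ofReal_add, Complex.ofReal_one, mul_add, mul_one, Complex.exp_add,
        Complex.exp_two_pi_mul_I, mul_one])

/-- The `2^d`-th power of the Gowers uniformity norm `‖F‖_{U^d}^{2^d}`,
as an expectation over `x` and directions `h₁,…,h_d`. -/
noncomputable def gowersPow {G : Type*} [AddCommGroup G] [Fintype G] (d : ℕ) (F : G → ℂ) : ℂ :=
  (∑ x : G, ∑ h : Fin d → G,
      ∏ S : Finset (Fin d), (starRingEnd ℂ)^[S.card] (F (x + ∑ i ∈ S, h i)))
    / ((Fintype.card G : ℂ) ^ (d + 1))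

/-!
Pairing each `S ⊆ [d]` with `S ∪ {j}` splits the Gowers cube product into factors
`C^k F(y) · C^{k+1} F(y)`, each equal to `|F(y)|² = 1` when `h j = 0`. Over `ZMod 2` the only
direction with no zero coordinate is `h = (1, …, 1)`, whose `2^{d-1}` pairs all contribute
`F(x) · conj F(x+1)`. Hence `‖F‖_{U^d}^{2^d} = 1 - 2^{-d} + 2^{-d} Re (F(0) conj F(1))^{2^{d-1}}`,
which for `F = e ∘ g` is the stated cosine. For the bound, if `m ∤ n` then `2πn/m` lies at
distance at least `2π/m` from `2πℤ`, and `cos x ≤ 1 - 2x²/π²` on `[-π, π]` gives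
`cos (2πn/m) ≤ 1 - 8/m²`; `m ∤ a·2^{d-1}` because `m` is odd and `0 < a < m`.
-/

open ComplexConjugate

lemma iterate_conj_mul_iterate_conj_succ {w : ℂ} (hw : ‖w‖ = 1) (k : ℕ) :
    conj^[k] w * conj^[k + 1] w = 1 := by
  have hnorm : ‖conj^[k] w‖ = ‖w‖ :=
    congrFun (Function.iterate_invariant (g := norm) (funext Complex.norm_conj) k) w
  rw [Function.iterate_succ_apply', Complex.mul_conj, Complex.normSq_eq_norm_sq, hnorm, hw]
  norm_num

lemma prod_finset_eq_prod_powerset_erase_mul_insert {ι β : Type*} [Fintype ι] [DecidableEq ι]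
    [CommMonoid β] (f : Finset ι → β) (j : ι) :
    ∏ S : Finset ι, f S = ∏ T ∈ (univ.erase j).powerset, f T * f (insert j T) := by
  conv_lhs => rw [← powerset_univ, ← insert_erase (mem_univ j)]
  rw [prod_powerset_insert (notMem_erase j _), prod_mul_distrib]

section Gowers

variable {G : Type*} [AddCommGroup G] {d : ℕ}

noncomputable def gowersCubeProd (d : ℕ) (F : G → ℂ) (x : G) (h : Fin d → G) : ℂ :=
  ∏ S : Finset (Fin d), conj^[S.card] (F (x + ∑ i ∈ S, h i))

lemma gowersPow_eq_sum_gowersCubeProd [Fintype G] (F : G → ℂ) :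
    gowersPow d F = (∑ x, ∑ h, gowersCubeProd d F x h) / (Fintype.card G : ℂ) ^ (d + 1) :=
  rfl

lemma gowersCubeProd_eq_one_of_apply_eq_zero {F : G → ℂ} (hF : ∀ x, ‖F x‖ = 1) (x : G)
    {h : Fin d → G} {j : Fin d} (hj : h j = 0) :
    gowersCubeProd d F x h = 1 := by
  rw [gowersCubeProd, prod_finset_eq_prod_powerset_erase_mul_insert _ j]
  refine prod_eq_one fun T hT => ?_
  have hjT : j ∉ T := fun hj' => notMem_erase j univ (mem_powerset.mp hT hj')
  rw [card_insert_of_notMem hjT, sum_insert hjT, hj, zero_add]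
  exact iterate_conj_mul_iterate_conj_succ (hF _) _

lemma iterate_conj_mul_iterate_conj_succ_zmod_two (F : ZMod 2 → ℂ) (x : ZMod 2) (k : ℕ) :
    conj^[k] (F (x + k)) * conj^[k + 1] (F (x + (k + 1 : ℕ))) = F x * conj (F (x + 1)) := by
  have hconj : Function.Involutive (conj : ℂ → ℂ) := Complex.conj_conj
  have two_eq_zero : (2 : ZMod 2) = 0 := rfl
  obtain ⟨t, rfl | rfl⟩ := Nat.even_or_odd' k
  · simp [hconj.iterate_two_mul, two_eq_zero]
  · rw [show 2 * t + 1 + 1 = 2 * (t + 1) by ring, hconj.iterate_two_mul,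
      hconj.iterate_two_mul_add_one]
    simp [two_eq_zero, mul_comm]

lemma gowersCubeProd_const_one_zmod_two (F : ZMod 2 → ℂ) (x : ZMod 2) (hd : 1 ≤ d) :
    gowersCubeProd d F x (fun _ => 1) = (F x * conj (F (x + 1))) ^ 2 ^ (d - 1) := by
  let j : Fin d := ⟨0, hd⟩
  have hpair : ∀ T ∈ (univ.erase j).powerset,
      conj^[T.card] (F (x + ∑ _i ∈ T, 1)) *
        conj^[(insert j T).card] (F (x + ∑ _i ∈ insert j T, 1)) = F x * conj (F (x + 1)) := by
    intro T hT
    have hjT : j ∉ T := fun hj => notMem_erase j univ (mem_powerset.mp hT hj)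
    simp only [sum_const, card_insert_of_notMem hjT, nsmul_one]
    exact iterate_conj_mul_iterate_conj_succ_zmod_two F x T.card
  rw [gowersCubeProd, prod_finset_eq_prod_powerset_erase_mul_insert _ j, prod_congr rfl hpair,
    prod_const, card_powerset, card_erase_of_mem (mem_univ _), card_univ, Fintype.card_fin]

lemma sum_gowersCubeProd_zmod_two {F : ZMod 2 → ℂ} (hF : ∀ x, ‖F x‖ = 1) (hd : 1 ≤ d)
    (x : ZMod 2) :
    ∑ h, gowersCubeProd d F x h = (2 ^ d - 1) + (F x * conj (F (x + 1))) ^ 2 ^ (d - 1) := by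
  have hdegenerate :
      ∀ h ∈ univ.erase (fun _ => 1 : Fin d → ZMod 2), gowersCubeProd d F x h = 1 := by
    intro h hh
    obtain ⟨j, hj⟩ := Function.ne_iff.mp (ne_of_mem_erase hh)
    have hj0 : h j = 0 := by generalize h j = b at hj; revert b; decide
    exact gowersCubeProd_eq_one_of_apply_eq_zero hF x hj0
  rw [← sum_erase_add _ _ (mem_univ fun _ => 1), gowersCubeProd_const_one_zmod_two F x hd,
    sum_congr rfl hdegenerate, sum_const, card_erase_of_mem (mem_univ _), card_univ,
    Fintype.card_fun, ZMod.card, Fintype.card_fin, nsmul_one, Nat.cast_sub Nat.one_le_two_pow]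
  norm_num

theorem gowersPow_zmod_two {F : ZMod 2 → ℂ} (hF : ∀ x, ‖F x‖ = 1) (hd : 1 ≤ d) :
    gowersPow d F =
      ((1 - 2 ^ (-(d : ℤ)) + 2 ^ (-(d : ℤ)) * ((F 0 * conj (F 1)) ^ 2 ^ (d - 1)).re : ℝ) : ℂ) := by
  have hconj : F 1 * conj (F (1 + 1)) = conj (F 0 * conj (F 1)) := by
    rw [map_mul, Complex.conj_conj, mul_comm]
    rfl
  rw [gowersPow_eq_sum_gowersCubeProd, show ∀ f : ZMod 2 → ℂ, ∑ x, f x = f 0 + f 1 from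
    Fin.sum_univ_two, sum_gowersCubeProd_zmod_two hF hd, sum_gowersCubeProd_zmod_two hF hd,
    zero_add, hconj, ← map_pow, add_add_add_comm, Complex.add_conj, ZMod.card]
  push_cast
  rw [zpow_neg, zpow_natCast]
  field_simp
  ring

end Gowers

section

open Real

lemma e_coe (t : ℝ) : e t = Complex.exp (2 * π * Complex.I * t) :=
  Function.Periodic.lift_coe _ t

lemma e_zero : e 0 = 1 := by
  simpa using e_coe 0

lemma norm_e (θ : AddCircle (1 : ℝ)) : ‖e θ‖ = 1 := by
  induction θ using QuotientAddGroup.induction_on with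
  | H t => rw [e_coe, Complex.norm_exp]; simp

lemma re_e_coe_pow (t : ℝ) (n : ℕ) : (e t ^ n).re = cos (2 * π * n * t) := by
  rw [e_coe, ← Complex.exp_nat_mul, ← Complex.exp_ofReal_mul_I_re]
  push_cast
  ring_nf

lemma cos_two_pi_mul_mod_div (n m : ℕ) :
    cos (2 * π * ((n % m : ℕ) : ℝ) / m) = cos (2 * π * n / m) := by
  rcases Nat.eq_zero_or_pos m with rfl | hm
  · simp
  conv_rhs => rw [← Nat.mod_add_div n m]
  rw [← cos_add_nat_mul_two_pi _ (n / m)]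
  congr 1
  push_cast
  field_simp

lemma cos_two_pi_mul_div_le_of_not_dvd {m : ℕ} {n : ℤ} (hmn : ¬ (m : ℤ) ∣ n) :
    cos (2 * π * n / m) ≤ 1 - 8 / m ^ 2 := by
  rcases Nat.eq_zero_or_pos m with rfl | hm
  · simp
  set k := round ((n : ℝ) / m)
  have hdist : (1 : ℝ) ≤ ((n - k * m : ℤ) : ℝ) ^ 2 := by
    have hne : n - k * m ≠ 0 := fun h => hmn ⟨k, by linarith⟩
    exact_mod_cast (one_le_sq_iff_one_le_abs _).mpr (Int.one_le_abs hne)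
  have hx : |2 * π * ((n : ℝ) / m - k)| ≤ π := by
    rw [abs_mul, abs_of_pos (by positivity)]
    nlinarith [abs_sub_round ((n : ℝ) / m), pi_pos]
  calc cos (2 * π * n / m) = cos (2 * π * ((n : ℝ) / m - k)) := by
        rw [← cos_sub_int_mul_two_pi (2 * π * n / m) k]
        ring_nf
    _ ≤ 1 - 2 / π ^ 2 * (2 * π * ((n : ℝ) / m - k)) ^ 2 := cos_le_one_sub_mul_cos_sq hx
    _ = 1 - 8 * ((n - k * m : ℤ) : ℝ) ^ 2 / m ^ 2 := by
        push_cast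
        field_simp
        ring
    _ ≤ 1 - 8 / m ^ 2 := by gcongr; linarith

end

/-- For `g : ZMod 2 → ℝ/ℤ` with `g(0)=0`, `g(1)=a/m` (`m` odd), the `2^d`-th
power of the Gowers norm of `e∘g` equals `(1-2^{-d}) + 2^{-d}cos(2πa'/m)`
with `a' = a·2^{d-1} mod m`, and hence is at most `1 - 2^{-d}·Ω(1/m²)`. -/
theorem stmt7 : ∃ c : ℝ, 0 < c ∧
    ∀ (m a d : ℕ), Odd m → 3 ≤ m → 1 ≤ a → a ≤ m - 1 → 1 ≤ d →
    ∀ g : ZMod 2 → AddCircle (1 : ℝ),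
      g 0 = 0 → g 1 = (((a : ℝ) / (m : ℝ)) : AddCircle (1 : ℝ)) →
      gowersPow d (fun x => e (g x)) =
        ((((1 - (2 : ℝ) ^ (-(d : ℤ))) +
          (2 : ℝ) ^ (-(d : ℤ)) * Real.cos (2 * Real.pi * ((a * 2 ^ (d - 1)) % m : ℕ) / m)) : ℝ) : ℂ) ∧
      (gowersPow d (fun x => e (g x))).re ≤ 1 - (2 : ℝ) ^ (-(d : ℤ)) * c / m ^ 2 := by
  refine ⟨8, by norm_num, fun m a d hodd _ ha1 ham hd g hg0 hg1 => ?_⟩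
  have hre : ((e 0 * conj (e ((a : ℝ) / m : ℝ))) ^ 2 ^ (d - 1)).re =
      Real.cos (2 * Real.pi * ((a * 2 ^ (d - 1)) % m : ℕ) / m) := by
    rw [e_zero, one_mul, ← map_pow, Complex.conj_re, re_e_coe_pow, cos_two_pi_mul_mod_div]
    push_cast
    ring_nf
  have hformula := gowersPow_zmod_two (fun x => norm_e (g x)) hd
  rw [hg0, hg1, hre] at hformula
  have hcoprime : m.Coprime (2 ^ (d - 1)) := (Nat.coprime_two_right.mpr hodd).pow_right _
  have hndvd : ¬ (m : ℤ) ∣ ((a * 2 ^ (d - 1) % m : ℕ) : ℤ) := by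
    rw [Int.natCast_dvd_natCast, Nat.dvd_mod_iff dvd_rfl]
    intro hdvd
    have := Nat.le_of_dvd (by omega) (hcoprime.dvd_of_dvd_mul_right hdvd)
    omega
  have hcos : Real.cos (2 * Real.pi * ((a * 2 ^ (d - 1)) % m : ℕ) / m) ≤ 1 - 8 / m ^ 2 := by
    exact_mod_cast cos_two_pi_mul_div_le_of_not_dvd hndvd
  refine ⟨hformula, ?_⟩
  rw [hformula, Complex.ofReal_re]
  calc _ ≤ 1 - 2 ^ (-(d : ℤ)) + 2 ^ (-(d : ℤ)) * (1 - 8 / (m : ℝ) ^ 2) := by gcongr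
    _ = _ := by ring
end

section
/- Let p be prime and let f₁,…,f_r : (ZMod p)^n → ℝ/ℤ be nonclassical polynomials of degree d with values on {0,1}^n in (1/p^k)ℤ/ℤ, all vanishing at 0^n. If n > (p^k − 1)·d·r, then there exists a nonzero x ∈ {0,1}^n with f₁(x) = ⋯ = f_r(x) = 0. -/
open Finset

/-- `x` is a Boolean point: all coordinates are `0` or `1`. -/
def IsBool {n : ℕ} {R : Type*} [Zero R] [One R] (x : Fin n → R) : Prop :=
  ∀ i, x i = 0 ∨ x i = 1

/-!
Restricted to the Boolean cube `{0,1}^n`, identified with `Finset (Fin n)`, every function has a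
unique multilinear expansion `G S = ∑_{T ⊆ S} c_T` with Möbius coefficients `c_T`; the degree of
`G` is the largest `#T` with `c_T ≠ 0`. The `(#T)`-th iterated derivative of `f_i` along the unit
vectors of `T`, evaluated at `0`, is `c_T`, so `S ↦ f_i(S)` has degree `≤ d`. Its values lie in
`(1/p^k)ℤ/ℤ`, hence lift to an integer-valued function `N_i` of degree `≤ d`, and `f_i(S) = 0` iff
`p^k ∣ N_i(S)`. By Lucas, `N.choose (p^j)` is the `j`-th base-`p` digit of `N` modulo `p`, and it is
a polynomial of degree `p^j` in `N`, so `g_i = ∏_{j<k} (1 - (N_i.choose (p^j))^(p-1))` is a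
`𝔽_p`-valued indicator of `f_i = 0` of degree `≤ (p^k - 1) d`. If `0` were the only common Boolean
root, `∏_i g_i` would be the indicator of `S = ∅`, whose top coefficient `c_univ = ±1` is nonzero:
its degree would be `n > (p^k - 1) d r`, a contradiction.
-/
theorem Nat.pow_dvd_iff_forall_dvd_div_pow {p k N : ℕ} :
    p ^ k ∣ N ↔ ∀ j < k, p ∣ N / p ^ j := by
  induction k with
  | zero => simp
  | succ k ih =>
    rw [Nat.forall_lt_succ_right, ← ih]
    constructor
    · intro h
      have hk : p ^ k ∣ N := (pow_dvd_pow p k.le_succ).trans h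
      exact ⟨hk, (Nat.dvd_div_iff_mul_dvd hk).2 (pow_succ p k ▸ h)⟩
    · rintro ⟨hk, hdiv⟩
      exact pow_succ p k ▸ (Nat.dvd_div_iff_mul_dvd hk).1 hdiv

theorem Nat.cast_choose_prime_pow {p : ℕ} [Fact p.Prime] (j N : ℕ) :
    (N.choose (p ^ j) : ZMod p) = (N / p ^ j : ℕ) := by
  induction j generalizing N with
  | zero => simp
  | succ j ih =>
    have hp : 0 < p := (Fact.out : p.Prime).pos
    have hlucas := (ZMod.natCast_eq_natCast_iff _ _ _).2
      (Choose.choose_modEq_choose_mod_mul_choose_div_nat (n := N) (k := p ^ (j + 1)) (p := p))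
    rw [hlucas, pow_succ', Nat.mul_mod_right, Nat.mul_div_cancel_left _ hp, Nat.choose_zero_right,
      one_mul, ih, Nat.div_div_eq_div_mul]

theorem Nat.prime_pow_dvd_iff_forall_choose {p : ℕ} [Fact p.Prime] {k N : ℕ} :
    p ^ k ∣ N ↔ ∀ j < k, (N.choose (p ^ j) : ZMod p) = 0 := by
  simp only [Nat.cast_choose_prime_pow, ZMod.natCast_eq_zero_iff, Nat.pow_dvd_iff_forall_dvd_div_pow]

theorem ZMod.one_sub_pow_card_sub_one {p : ℕ} [Fact p.Prime] (x : ZMod p) :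
    1 - x ^ (p - 1) = if x = 0 then 1 else 0 := by
  by_cases hx : x = 0
  · have : p - 1 ≠ 0 := Nat.sub_ne_zero_of_lt (Fact.out : p.Prime).one_lt
    simp [hx, this]
  · simp [hx, ZMod.pow_card_sub_one_eq_one hx]

namespace BoolCube

section Mobius

variable {α M N : Type*} [AddCommGroup M] [AddCommGroup N]

def mobiusCoeff (G : Finset α → M) (T : Finset α) : M :=
  ∑ U ∈ T.powerset, (-1 : ℤ) ^ (#T + #U) • G U

lemma mobiusCoeff_congr {G G' : Finset α → M} {T : Finset α} (h : ∀ U ⊆ T, G U = G' U) :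
    mobiusCoeff G T = mobiusCoeff G' T :=
  sum_congr rfl fun U hU => by rw [h U (mem_powerset.1 hU)]

lemma mobiusCoeff_map (φ : M →+ N) (G : Finset α → M) (T : Finset α) :
    mobiusCoeff (fun S => φ (G S)) T = φ (mobiusCoeff G T) := by
  simp only [mobiusCoeff, map_sum, map_zsmul]

lemma mobiusCoeff_add (G H : Finset α → M) (T : Finset α) :
    mobiusCoeff (G + H) T = mobiusCoeff G T + mobiusCoeff H T := by
  simp only [mobiusCoeff, Pi.add_apply, smul_add, sum_add_distrib]

lemma mobiusCoeff_smul {R : Type*} [Ring R] [Module R M] (a : R) (G : Finset α → M)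
    (T : Finset α) : mobiusCoeff (a • G) T = a • mobiusCoeff G T := by
  simp only [mobiusCoeff, Pi.smul_apply, smul_sum, smul_comm a]

variable [DecidableEq α]

lemma mobiusCoeff_insert (G : Finset α → M) {i : α} {T : Finset α} (hi : i ∉ T) :
    mobiusCoeff G (insert i T) = mobiusCoeff (fun U => G (insert i U) - G U) T := by
  rw [mobiusCoeff, mobiusCoeff, sum_powerset_insert hi, ← sum_add_distrib]
  refine sum_congr rfl fun U hU => ?_
  have hiU : i ∉ U := fun h => hi (mem_powerset.1 hU h)
  have h1 : (-1 : ℤ) ^ (#T + 1 + #U) = -(-1) ^ (#T + #U) := by ring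
  have h2 : (-1 : ℤ) ^ (#T + 1 + (#U + 1)) = (-1) ^ (#T + #U) := by ring
  rw [card_insert_of_notMem hi, card_insert_of_notMem hiU, h1, h2, smul_sub, neg_smul]
  abel

theorem sum_mobiusCoeff (G : Finset α → M) (S : Finset α) :
    ∑ T ∈ S.powerset, mobiusCoeff G T = G S := by
  induction S using Finset.induction_on generalizing G with
  | empty => simp [mobiusCoeff]
  | insert i S hi ih =>
    rw [sum_powerset_insert hi, ih, sum_congr rfl fun T hT =>
      mobiusCoeff_insert G fun h => hi (mem_powerset.1 hT h), ih]
    abel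

end Mobius

section Degree

variable {α R : Type*} [DecidableEq α] [CommRing R]

/-- The multilinear monomial `∏ i ∈ C, x i` on `{0,1}^α`. -/
def monomial (C : Finset α) : Finset α → R := fun S => if C ⊆ S then 1 else 0

variable (R) in
def degreeLE (d : ℕ) : Submodule R (Finset α → R) :=
  Submodule.span R (monomial '' {C | #C ≤ d})

lemma monomial_mem_degreeLE {C : Finset α} {d : ℕ} (h : #C ≤ d) :
    (monomial C : Finset α → R) ∈ degreeLE R d :=
  Submodule.subset_span ⟨C, h, rfl⟩

lemma degreeLE_mono {d d' : ℕ} (h : d ≤ d') : degreeLE R d ≤ degreeLE (α := α) R d' :=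
  Submodule.span_mono (Set.image_mono fun _ hC => le_trans hC h)

lemma one_mem_degreeLE (d : ℕ) : (1 : Finset α → R) ∈ degreeLE R d := by
  convert monomial_mem_degreeLE (R := R) (C := (∅ : Finset α)) (Nat.zero_le d) using 1
  ext S
  simp [monomial]

lemma mobiusCoeff_monomial_eq_zero {C T : Finset α} (h : #C < #T) :
    mobiusCoeff (monomial C : Finset α → R) T = 0 := by
  obtain ⟨i, hiT, hiC⟩ := exists_mem_notMem_of_card_lt_card h
  rw [← insert_erase hiT, mobiusCoeff_insert _ (notMem_erase i T)]
  simp [monomial, subset_insert_iff_of_notMem hiC, mobiusCoeff]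

theorem sum_powerset_mem_degreeLE [Fintype α] {a : Finset α → R} {d : ℕ}
    (ha : ∀ T, d < #T → a T = 0) : (fun S => ∑ T ∈ S.powerset, a T) ∈ degreeLE R d := by
  have hsum : (fun S => ∑ T ∈ S.powerset, a T) = ∑ T, a T • monomial T := by
    ext S
    simp only [Finset.sum_apply, Pi.smul_apply, monomial, smul_eq_mul, mul_ite, mul_one, mul_zero,
      sum_ite, sum_const_zero, add_zero]
    exact sum_congr (by ext; simp) fun _ _ => rfl
  rw [hsum]
  refine Submodule.sum_mem _ fun T _ => ?_
  by_cases hT : d < #T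
  · simp [ha T hT]
  · exact Submodule.smul_mem _ _ (monomial_mem_degreeLE (not_lt.1 hT))

theorem mem_degreeLE_iff [Fintype α] {G : Finset α → R} {d : ℕ} :
    G ∈ degreeLE R d ↔ ∀ T, d < #T → mobiusCoeff G T = 0 := by
  refine ⟨fun hG T hT => ?_, fun h => ?_⟩
  · induction hG using Submodule.span_induction with
    | mem _ hx =>
      obtain ⟨C, hC, rfl⟩ := hx
      exact mobiusCoeff_monomial_eq_zero (lt_of_le_of_lt hC hT)
    | zero => simp [mobiusCoeff]
    | add _ _ _ _ hx hy => rw [mobiusCoeff_add, hx, hy, add_zero]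
    | smul a _ _ hx => rw [mobiusCoeff_smul, hx, smul_zero]
  · simpa only [sum_mobiusCoeff] using sum_powerset_mem_degreeLE h

theorem mul_mem_degreeLE {G H : Finset α → R} {d e : ℕ} (hG : G ∈ degreeLE R d)
    (hH : H ∈ degreeLE R e) : G * H ∈ degreeLE R (d + e) := by
  have hGH := Submodule.mul_mem_mul hG hH
  rw [degreeLE, degreeLE, Submodule.span_mul_span] at hGH
  refine Submodule.span_mono ?_ hGH
  rintro _ ⟨_, ⟨A, hA, rfl⟩, _, ⟨B, hB, rfl⟩, rfl⟩
  refine ⟨A ∪ B, (card_union_le A B).trans (add_le_add hA hB), ?_⟩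
  ext S
  simp only [monomial, Pi.mul_apply, union_subset_iff, ite_zero_mul_ite_zero, mul_one]

theorem prod_mem_degreeLE {ι : Type*} (s : Finset ι) {G : ι → Finset α → R} {d : ι → ℕ}
    (h : ∀ i ∈ s, G i ∈ degreeLE R (d i)) : ∏ i ∈ s, G i ∈ degreeLE R (∑ i ∈ s, d i) := by
  classical
  induction s using Finset.induction_on with
  | empty => simpa using one_mem_degreeLE 0
  | insert i s hi ih =>
    rw [prod_insert hi, sum_insert hi]
    exact mul_mem_degreeLE (h i (mem_insert_self i s)) (ih fun j hj => h j (mem_insert_of_mem hj))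

theorem pow_mem_degreeLE {G : Finset α → R} {d : ℕ} (hG : G ∈ degreeLE R d) (m : ℕ) :
    G ^ m ∈ degreeLE R (m * d) := by
  simpa using prod_mem_degreeLE (range m) (d := fun _ => d) fun _ _ => hG

theorem eval_mem_degreeLE (P : Polynomial R) {G : Finset α → R} {d : ℕ}
    (hG : G ∈ degreeLE R d) : (fun S => P.eval (G S)) ∈ degreeLE R (P.natDegree * d) := by
  have hsum : (fun S => P.eval (G S)) = ∑ i ∈ range (P.natDegree + 1), P.coeff i • G ^ i := by
    ext S
    simp [Polynomial.eval_eq_sum_range, Finset.sum_apply]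
  rw [hsum]
  refine Submodule.sum_mem _ fun i hi => Submodule.smul_mem _ _ ?_
  exact degreeLE_mono (Nat.mul_le_mul_right d (Nat.lt_succ_iff.1 (mem_range.1 hi)))
    (pow_mem_degreeLE hG i)

end Degree

section Transfer

variable {α R R' : Type*} [DecidableEq α] [Fintype α] [CommRing R] [CommRing R']

theorem map_mem_degreeLE (φ : R →+ R') {G : Finset α → R} {d : ℕ} (hG : G ∈ degreeLE R d) :
    (fun S => φ (G S)) ∈ degreeLE R' d := by
  rw [mem_degreeLE_iff] at hG ⊢
  intro T hT
  rw [mobiusCoeff_map, hG T hT, map_zero]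

theorem mem_degreeLE_of_map (φ : R →+ R') (hφ : Function.Injective φ) {G : Finset α → R} {d : ℕ}
    (hG : (fun S => φ (G S)) ∈ degreeLE R' d) : G ∈ degreeLE R d := by
  rw [mem_degreeLE_iff] at hG ⊢
  intro T hT
  apply hφ
  rw [← mobiusCoeff_map, hG T hT, map_zero]

theorem choose_mem_degreeLE {N : Finset α → ℕ} {d : ℕ}
    (hN : (fun S => (N S : ℤ)) ∈ degreeLE ℤ d) (m : ℕ) :
    (fun S => ((N S).choose m : R)) ∈ degreeLE R (m * d) := by
  have hNℚ : (fun S => (N S : ℚ)) ∈ degreeLE ℚ d := by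
    simpa using map_mem_degreeLE (Int.castAddHom ℚ) hN
  have hℚ : (fun S => ((N S).choose m : ℚ)) ∈ degreeLE ℚ (m * d) := by
    let P := Polynomial.C (m.factorial : ℚ)⁻¹ * descPochhammer ℚ m
    have hP : P.natDegree ≤ m :=
      (Polynomial.natDegree_C_mul_le _ _).trans (descPochhammer_natDegree ℚ m).le
    refine degreeLE_mono (Nat.mul_le_mul_right d hP) ?_
    simpa [P, Nat.cast_choose_eq_descPochhammer_div, div_eq_inv_mul] using
      eval_mem_degreeLE P hNℚ
  have hℤ : (fun S => ((N S).choose m : ℤ)) ∈ degreeLE ℤ (m * d) :=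
    mem_degreeLE_of_map (Int.castAddHom ℚ) Int.cast_injective (by simpa using hℚ)
  simpa using map_mem_degreeLE (Int.castAddHom R) hℤ

theorem exists_natCast_eq_of_mem_degreeLE {q d : ℕ} [NeZero q] {G : Finset α → ZMod q}
    (hG : G ∈ degreeLE (ZMod q) d) :
    ∃ N : Finset α → ℕ, (fun S => (N S : ℤ)) ∈ degreeLE ℤ d ∧ ∀ S, (N S : ZMod q) = G S := by
  refine ⟨fun S => ∑ T ∈ S.powerset, (mobiusCoeff G T).val, ?_, fun S => ?_⟩
  · push_cast
    exact sum_powerset_mem_degreeLE fun T hT => by simp [mem_degreeLE_iff.1 hG T hT]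
  · simp [sum_mobiusCoeff]

theorem indicator_empty_notMem_degreeLE [Nontrivial R] {d : ℕ} (hd : d < Fintype.card α) :
    (fun S : Finset α => if S = ∅ then (1 : R) else 0) ∉ degreeLE R d := by
  intro h
  have := mem_degreeLE_iff.1 h univ (by rwa [card_univ])
  simp [mobiusCoeff] at this
  exact (isUnit_neg_one.pow _).ne_zero this

end Transfer

theorem exists_indicator_mem_degreeLE {α : Type*} [DecidableEq α] [Fintype α] {p k d : ℕ}
    [Fact p.Prime] {F : Finset α → ZMod (p ^ k)} (hF : F ∈ degreeLE (ZMod (p ^ k)) d) :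
    ∃ g ∈ degreeLE (ZMod p) ((p ^ k - 1) * d), ∀ S, g S = if F S = 0 then 1 else 0 := by
  have hp : p.Prime := Fact.out
  have : NeZero (p ^ k) := ⟨pow_ne_zero k hp.ne_zero⟩
  obtain ⟨N, hN, hNF⟩ := exists_natCast_eq_of_mem_degreeLE hF
  let digit (j : ℕ) : Finset α → ZMod p := fun S => ((N S).choose (p ^ j) : ZMod p)
  refine ⟨∏ j ∈ range k, (1 - digit j ^ (p - 1)), ?_, fun S => ?_⟩
  · have hdeg : ∑ j ∈ range k, (p - 1) * (p ^ j * d) = (p ^ k - 1) * d := by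
      rw [← geom_sum_mul_of_one_le hp.one_le, sum_mul, sum_mul]
      exact sum_congr rfl fun j _ => by ring
    rw [← hdeg]
    exact prod_mem_degreeLE _ fun j _ =>
      Submodule.sub_mem _ (one_mem_degreeLE _) (pow_mem_degreeLE (choose_mem_degreeLE hN _) _)
  · simp only [Finset.prod_apply, Pi.sub_apply, Pi.one_apply, Pi.pow_apply, digit,
      ZMod.one_sub_pow_card_sub_one, prod_boole, mem_range, ← hNF, ZMod.natCast_eq_zero_iff,
      Nat.prime_pow_dvd_iff_forall_choose]

section Nonclassical

variable {ι R M : Type*} [DecidableEq ι] [AddMonoidWithOne R] [AddCommGroup M]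

def point (S : Finset ι) : ι → R := fun i => if i ∈ S then 1 else 0

lemma isBool_point {n : ℕ} (S : Finset (Fin n)) : IsBool (point S : Fin n → R) := fun i => by
  by_cases hi : i ∈ S <;> simp [point, hi]

lemma point_empty : point (∅ : Finset ι) = (0 : ι → R) := by
  ext i
  simp [point]

lemma point_insert {i : ι} {U : Finset ι} (hi : i ∉ U) :
    point (insert i U) = (point U : ι → R) + Pi.single i 1 := by
  ext j
  by_cases hj : j = i
  · subst hj
    simp [point, hi]
  · simp [point, hj]

lemma point_ne_zero [NeZero (1 : R)] {S : Finset ι} (hS : S ≠ ∅) : (point S : ι → R) ≠ 0 := by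
  obtain ⟨i, hi⟩ := nonempty_iff_ne_empty.2 hS
  exact fun h => (one_ne_zero : (1 : R) ≠ 0) (by simpa [point, hi] using congrFun h i)

lemma foldr_D_zero {V : Type*} [Add V] (l : List V) : l.foldr D (0 : V → M) = 0 := by
  induction l with
  | nil => rfl
  | cons h t ih =>
    ext x
    simp [List.foldr_cons, ih, D]

lemma IsNCPoly.foldr_eq_zero {V : Type*} [Add V] {d : ℕ} {f : V → M} (hf : IsNCPoly d f)
    {l : List V} (hl : d + 1 ≤ l.length) : l.foldr D f = 0 := by
  rw [← List.take_append_drop (l.length - (d + 1)) l, List.foldr_append,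
    hf _ (by simp; omega), foldr_D_zero]

theorem mobiusCoeff_comp_point_eq_zero {f : (ι → R) → M} {T : Finset ι}
    (hf : ∀ l : List (ι → R), l.length = #T → l.foldr D f = 0) :
    mobiusCoeff (fun S => f (point S)) T = 0 := by
  induction T using Finset.induction_on generalizing f with
  | empty => simp [mobiusCoeff, show f = 0 from hf [] rfl]
  | insert i T hi ih =>
    rw [mobiusCoeff_insert _ hi, mobiusCoeff_congr (G' := fun S => D (Pi.single i 1) f (point S))
      fun U hU => by rw [point_insert fun h => hi (hU h)]; rfl]
    refine ih fun l hl => ?_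
    have := hf (l ++ [Pi.single i 1]) (by simp [hl, card_insert_of_notMem hi])
    rwa [List.foldr_append] at this

theorem IsNCPoly.mem_degreeLE [Fintype ι] {R' : Type*} [CommRing R'] {d : ℕ}
    {f : (ι → R) → M} (hf : IsNCPoly d f) (φ : R' →+ M) (hφ : Function.Injective φ)
    {F : Finset ι → R'} (hF : ∀ S, φ (F S) = f (point S)) : F ∈ degreeLE R' d :=
  mem_degreeLE_iff.2 fun T hT => hφ <| by
    rw [← mobiusCoeff_map, map_zero]
    simp only [hF]
    exact mobiusCoeff_comp_point_eq_zero fun l hl => IsNCPoly.foldr_eq_zero hf (by omega)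

end Nonclassical

end BoolCube

open BoolCube in
/-- Common Boolean root for several nonclassical polynomials vanishing at `0`:
if `n > (p^k - 1)·d·r` then the `r` polynomials have a common nonzero root. -/
theorem stmt15 (p n d k r : ℕ) [Fact p.Prime]
    (f : Fin r → (Fin n → ZMod p) → AddCircle (1 : ℝ))
    (hdeg : ∀ i, IsNCPoly d (f i))
    (hval : ∀ i, ∀ x : Fin n → ZMod p, IsBool x →
      ∃ m : ℤ, f i x = ((((m : ℝ) / p ^ k : ℝ)) : AddCircle (1 : ℝ)))
    (h0 : ∀ i, f i 0 = 0) (hn : (p ^ k - 1) * d * r < n) :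
    ∃ x : Fin n → ZMod p, IsBool x ∧ x ≠ 0 ∧ ∀ i, f i x = 0 := by
  by_contra! hcon
  have : NeZero (p ^ k) := ⟨pow_ne_zero k (Fact.out : p.Prime).ne_zero⟩
  have hlift : ∀ i S, ∃ c : ZMod (p ^ k), ZMod.toAddCircle c = f i (point S) := fun i S => by
    obtain ⟨m, hm⟩ := hval i _ (isBool_point S)
    exact ⟨m, by rw [ZMod.toAddCircle_intCast, hm]; push_cast; rfl⟩
  choose F hF using hlift
  have hind : ∀ i, ∃ g ∈ degreeLE (ZMod p) ((p ^ k - 1) * d),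
      ∀ S, g S = if f i (point S) = 0 then 1 else 0 := fun i => by
    obtain ⟨g, hg, hgF⟩ := exists_indicator_mem_degreeLE
      (IsNCPoly.mem_degreeLE (hdeg i) _ (ZMod.toAddCircle_injective _) (hF i))
    exact ⟨g, hg, fun S => by simp [hgF, ← hF]⟩
  choose g hg hgf using hind
  have hroots : ∀ S, (∀ i, f i (point S) = 0) ↔ S = ∅ := fun S => by
    refine ⟨fun h => ?_, ?_⟩
    · by_contra hS
      obtain ⟨i, hi⟩ := hcon _ (isBool_point S) (point_ne_zero hS)
      exact hi (h i)
    · rintro rfl i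
      rw [point_empty, h0]
  have hprod := prod_mem_degreeLE univ fun i _ => hg i
  rw [sum_const, card_univ, Fintype.card_fin, smul_eq_mul, mul_comm] at hprod
  refine indicator_empty_notMem_degreeLE (R := ZMod p) (α := Fin n) (by rwa [Fintype.card_fin]) ?_
  convert hprod using 1
  ext S
  simp only [Finset.prod_apply, hgf, Fintype.prod_boole, hroots]
end
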